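/- arXiv:math/0411569 — 2 statements merged into one kernel-verified Lean document; each statement's English description precedes it below -/
import Mathlib

section
/- For x, y in the open unit ball 𝔹ⁿ, with φ_x(y) = ((|x|²−1)y + (|y|² − 2⟨x,y⟩ + 1)x)/(|x|²|y|² − 2⟨x,y⟩ + 1), one has the identity |φ_x(y)|² = |x−y|² / ((1−|x|²)(1−|y|²) + |x−y|²). -/
open RealInnerProductSpace

/-- The involutive Möbius transformation `φ_x` of the unit ball in `ℝⁿ`. -/
noncomputable def mobiusPhi {n : ℕ} (x y : EuclideanSpace ℝ (Fin n)) :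
    EuclideanSpace ℝ (Fin n) :=
  (‖x‖ ^ 2 * ‖y‖ ^ 2 - 2 * ⟪x, y⟫ + 1)⁻¹ •
    ((‖x‖ ^ 2 - 1) • y + (‖y‖ ^ 2 - 2 * ⟪x, y⟫ + 1) • x)

section InnerProductSpace

variable {E : Type*} [NormedAddCommGroup E] [InnerProductSpace ℝ E]

theorem mobius_denom_eq (x y : E) :
    ‖x‖ ^ 2 * ‖y‖ ^ 2 - 2 * ⟪x, y⟫ + 1 = (1 - ‖x‖ ^ 2) * (1 - ‖y‖ ^ 2) + ‖x - y‖ ^ 2 := by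
  rw [norm_sub_sq_real]
  ring

theorem norm_sq_mobius_numerator (x y : E) :
    ‖(‖x‖ ^ 2 - 1) • y + (‖y‖ ^ 2 - 2 * ⟪x, y⟫ + 1) • x‖ ^ 2 =
      ‖x - y‖ ^ 2 * (‖x‖ ^ 2 * ‖y‖ ^ 2 - 2 * ⟪x, y⟫ + 1) := by
  rw [norm_add_sq_real, norm_smul, norm_smul, mul_pow, mul_pow, Real.norm_eq_abs,
    Real.norm_eq_abs, sq_abs, sq_abs, real_inner_smul_left, real_inner_smul_right,
    real_inner_comm x y, norm_sub_sq_real]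
  ring

/-- For `c = 0` both sides vanish, by the conventions `0⁻¹ = 0` and `r / 0 = 0`. -/
theorem norm_inv_smul_sq_of_norm_sq_eq_mul {c r : ℝ} {v : E} (h : ‖v‖ ^ 2 = r * c) :
    ‖c⁻¹ • v‖ ^ 2 = r / c := by
  rw [norm_smul, mul_pow, h, norm_inv, Real.norm_eq_abs, inv_pow, sq_abs]
  rcases eq_or_ne c 0 with rfl | hc
  · simp
  · field_simp

end InnerProductSpace

theorem stmt4_general (n : ℕ) (x y : EuclideanSpace ℝ (Fin n)) :
    ‖mobiusPhi x y‖ ^ 2 =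
      ‖x - y‖ ^ 2 / ((1 - ‖x‖ ^ 2) * (1 - ‖y‖ ^ 2) + ‖x - y‖ ^ 2) := by
  rw [mobiusPhi, norm_inv_smul_sq_of_norm_sq_eq_mul (norm_sq_mobius_numerator x y),
    mobius_denom_eq]

theorem stmt4 (n : ℕ) (x y : EuclideanSpace ℝ (Fin n)) (hx : ‖x‖ < 1) (hy : ‖y‖ < 1) :
    ‖mobiusPhi x y‖ ^ 2 =
      ‖x - y‖ ^ 2 / ((1 - ‖x‖ ^ 2) * (1 - ‖y‖ ^ 2) + ‖x - y‖ ^ 2) :=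
  stmt4_general n x y
end

section
/- For x, y in the open unit ball 𝔹ⁿ, let A = (1−|x|²)(1−|y|²) + |x−y|² and z = ((x−y)(1−|x|²) + x|x−y|²)/A, r = |x−y|/√A. Then | z/r − (x−y)/|x−y| | ≤ C·r for a constant C depending only on n (whenever x ≠ y), i.e. the direction of z = φ_x(y) differs from the Euclidean direction (x−y)/|x−y| by O(r). -/
set_option maxHeartbeats 2000000 in
theorem stmt15 (n : ℕ) :
    ∃ C : ℝ, 0 < C ∧
      ∀ x y : EuclideanSpace ℝ (Fin n), ‖x‖ < 1 → ‖y‖ < 1 → x ≠ y →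
        let A : ℝ := (1 - ‖x‖ ^ 2) * (1 - ‖y‖ ^ 2) + ‖x - y‖ ^ 2
        let z : EuclideanSpace ℝ (Fin n) :=
          A⁻¹ • ((1 - ‖x‖ ^ 2) • (x - y) + ‖x - y‖ ^ 2 • x)
        let r : ℝ := ‖x - y‖ / Real.sqrt A
        ‖r⁻¹ • z - ‖x - y‖⁻¹ • (x - y)‖ ≤ C * r := by
  refine ⟨4, by norm_num, ?_⟩
  intro x y hx hy hxy A z r
  set a : ℝ := 1 - ‖x‖ ^ 2 with ha
  set b : ℝ := 1 - ‖y‖ ^ 2 with hb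
  set d : ℝ := ‖x - y‖ with hd
  have hd0 : 0 < d := norm_pos_iff.mpr (sub_ne_zero.mpr hxy)
  have ha0 : 0 < a := by nlinarith [norm_nonneg x]
  have hb0 : 0 < b := by nlinarith [norm_nonneg y]
  have ha1 : a ≤ 1 := by nlinarith [norm_nonneg x]
  have hA : 0 < A := by positivity
  set s : ℝ := Real.sqrt A with hsdef
  have hs : 0 < s := Real.sqrt_pos.mpr hA
  have hs2 : s ^ 2 = A := Real.sq_sqrt hA.le
  have hsA : s ^ 2 = a * b + d ^ 2 := hs2
  have hds : d ≤ s := by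
    rw [hsdef, ← Real.sqrt_sq hd0.le]
    exact Real.sqrt_le_sqrt (by nlinarith [mul_pos ha0 hb0])
  have hab : |a - b| ≤ 2 * d := by
    have h1 : |‖x‖ - ‖y‖| ≤ d := abs_norm_sub_norm_le x y
    have hx1 := norm_nonneg x
    have hy1 := norm_nonneg y
    rw [abs_le] at h1 ⊢
    constructor <;> nlinarith [abs_nonneg (‖x‖ - ‖y‖)]
  have has : |a - s| ≤ 3 * d := by
    rw [abs_le] at hab ⊢
    have h1 := mul_le_mul_of_nonneg_left hab.1 ha0.le
    have h2 := mul_le_mul_of_nonneg_left hab.2 ha0.le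
    have h3 := mul_le_mul_of_nonneg_right hds hd0.le
    constructor
    · nlinarith [mul_pos hd0 hs, mul_pos hd0 ha0, mul_pos ha0 hs]
    · nlinarith [mul_pos hd0 hs, mul_pos hd0 ha0, mul_pos ha0 hs]
  have key : r⁻¹ • z - d⁻¹ • (x - y) = ((a / s - 1) / d) • (x - y) + (d / s) • x := by
    show (d / s)⁻¹ • (A⁻¹ • (a • (x - y) + d ^ 2 • x)) - d⁻¹ • (x - y)
        = ((a / s - 1) / d) • (x - y) + (d / s) • x
    rw [← hs2]
    match_scalars <;> field_simp <;> ring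
  rw [key]
  have h1 : ‖((a / s - 1) / d) • (x - y) + (d / s) • x‖
      ≤ |(a / s - 1) / d| * d + (d / s) * ‖x‖ := by
    calc ‖((a / s - 1) / d) • (x - y) + (d / s) • x‖
        ≤ ‖((a / s - 1) / d) • (x - y)‖ + ‖(d / s) • x‖ := norm_add_le _ _
      _ ≤ |(a / s - 1) / d| * d + (d / s) * ‖x‖ := by
          rw [norm_smul, norm_smul, Real.norm_eq_abs, Real.norm_eq_abs,
            abs_of_pos (by positivity : (0:ℝ) < d / s)]
  have h2 : |(a / s - 1) / d| * d = |a - s| / s := by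
    have he : a / s - 1 = (a - s) / s := by field_simp
    rw [he, abs_div, abs_div, abs_of_pos hd0, abs_of_pos hs]
    exact div_mul_cancel₀ _ hd0.ne'
  have hr : r = d / s := rfl
  calc ‖((a / s - 1) / d) • (x - y) + (d / s) • x‖
      ≤ |(a / s - 1) / d| * d + (d / s) * ‖x‖ := h1
    _ = |a - s| / s + (d / s) * ‖x‖ := by rw [h2]
    _ ≤ (3 * d) / s + (d / s) * 1 := by gcongr
    _ = 4 * r := by rw [hr]; ring
end
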